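/- Under the SISO discrete-time adaptive law setup with |k_p| · xᵀ Γ x < 2 xᵀ x for all nonzero x ∈ ℝ^N, the normalized estimation error is square-summable and uniformly bounded: ∑_{t=0}^{∞} ε(t)²/m(t)² < ∞ and sup_{t ∈ ℕ} |ε(t)|/m(t) < ∞ (i.e. ε/m ∈ L² ∩ L^∞). -/

import Mathlib

/-!
With the parameter errors `θ̃ = θ - θ*`, `ρ̃ = ρ - k_p`, the function
`V = |k_p| θ̃ᵀ Γ⁻¹ θ̃ + ρ̃² / γ` is nonnegative and, since `ε = k_p θ̃ᵀ ζ + ρ̃ ξ`, one step of the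
adaptive law changes it by `-2 ε²/m² + (ε²/m⁴) (|k_p| ζᵀ Γ ζ + γ ξ²)`. By compactness of the unit
sphere the strict bound `|k_p| xᵀ Γ x < 2 xᵀ x` holds uniformly as `|k_p| xᵀ Γ x ≤ c xᵀ x` with
`c < 2`; as `m² = 1 + ζᵀζ + ξ²`, `V` then drops by at least `(2 - max c γ) ε²/m²` per step.
Telescoping bounds the partial sums of `ε²/m²` by `V(0) / (2 - max c γ)`.
-/

open Matrix BigOperators

open Finset

namespace Real

theorem sign_mul_abs_self (r : ℝ) : sign r * |r| = r := by
  obtain hr | rfl | hr := lt_trichotomy r 0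
  · rw [sign_of_neg hr, abs_of_neg hr]; ring
  · simp
  · rw [sign_of_pos hr, abs_of_pos hr]; ring

theorem abs_mul_sign_sq (r : ℝ) : |r| * sign r ^ 2 = |r| := by
  obtain hr | rfl | hr := lt_trichotomy r 0
  · rw [sign_of_neg hr]; ring
  · simp
  · rw [sign_of_pos hr]; ring

end Real

theorem sum_range_le_div_of_le_sub {V e : ℕ → ℝ} {κ : ℝ} (hκ : 0 < κ) (hV : ∀ t, 0 ≤ V t)
    (h : ∀ t, V (t + 1) ≤ V t - κ * e t) (n : ℕ) : ∑ t ∈ range n, e t ≤ V 0 / κ := by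
  rw [le_div_iff₀' hκ, mul_sum]
  calc ∑ t ∈ range n, κ * e t ≤ ∑ t ∈ range n, (V t - V (t + 1)) :=
        sum_le_sum fun t _ => by linarith [h t]
    _ = V 0 - V n := sum_range_sub' V n
    _ ≤ V 0 := by linarith [hV n]

theorem summable_and_le_div_of_le_sub {V e : ℕ → ℝ} {κ : ℝ} (hκ : 0 < κ) (hV : ∀ t, 0 ≤ V t)
    (he : ∀ t, 0 ≤ e t) (h : ∀ t, V (t + 1) ≤ V t - κ * e t) :
    Summable e ∧ ∀ t, e t ≤ V 0 / κ :=
  have hsum := sum_range_le_div_of_le_sub hκ hV h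
  ⟨summable_of_sum_range_le he hsum, fun t ↦
    (single_le_sum (fun i _ ↦ he i) (self_mem_range_succ t)).trans (hsum (t + 1))⟩

namespace Matrix

variable {ι : Type*} [Fintype ι]

theorem dotProduct_self_nonneg (x : ι → ℝ) : 0 ≤ x ⬝ᵥ x :=
  sum_nonneg fun i _ ↦ mul_self_nonneg (x i)

theorem dotProduct_self_pos {x : ι → ℝ} (hx : x ≠ 0) : 0 < x ⬝ᵥ x :=
  (dotProduct_self_nonneg x).lt_of_ne' (dotProduct_self_eq_zero.not.mpr hx)

-- The ratio is scale invariant, so its minimum over the unit sphere bounds it everywhere.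
theorem exists_pos_mul_dotProduct_self_le (A : Matrix ι ι ℝ)
    (hA : ∀ x ≠ 0, 0 < x ⬝ᵥ A *ᵥ x) : ∃ δ > 0, ∀ x, δ * (x ⬝ᵥ x) ≤ x ⬝ᵥ A *ᵥ x := by
  let r : (ι → ℝ) → ℝ := fun x ↦ (x ⬝ᵥ A *ᵥ x) / (x ⬝ᵥ x)
  let S := Metric.sphere (0 : ι → ℝ) 1
  have hS : ∀ x ≠ 0, ‖x‖⁻¹ • x ∈ S := fun x hx ↦ by simp [S, norm_smul, hx]
  have hr : ∀ x ≠ 0, r (‖x‖⁻¹ • x) = r x := fun x hx ↦ by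
    have : ‖x‖ ≠ 0 := norm_ne_zero_iff.mpr hx
    simp only [r, mulVec_smul, dotProduct_smul, smul_dotProduct, smul_eq_mul]
    field_simp
  rcases Set.eq_empty_or_nonempty S with hS_empty | hS_ne
  · refine ⟨1, one_pos, fun x ↦ ?_⟩
    obtain rfl : x = 0 := by
      by_contra hx
      simpa [hS_empty] using hS x hx
    simp
  have hcont : ContinuousOn r S := by
    refine ContinuousOn.div (by fun_prop) (by fun_prop) fun x hx ↦ ?_
    exact (dotProduct_self_pos (ne_zero_of_mem_sphere one_ne_zero ⟨x, hx⟩)).ne'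
  obtain ⟨z, hzS, hz_min⟩ := (isCompact_sphere 0 1).exists_isMinOn hS_ne hcont
  have hz : z ≠ 0 := ne_zero_of_mem_sphere one_ne_zero ⟨z, hzS⟩
  refine ⟨r z, div_pos (hA z hz) (dotProduct_self_pos hz), fun x ↦ ?_⟩
  rcases eq_or_ne x 0 with rfl | hx
  · simp
  have hzx : r z ≤ r x := hr x hx ▸ hz_min (hS x hx)
  calc r z * (x ⬝ᵥ x) ≤ r x * (x ⬝ᵥ x) :=
        mul_le_mul_of_nonneg_right hzx (dotProduct_self_nonneg x)
    _ = x ⬝ᵥ A *ᵥ x := div_mul_cancel₀ _ (dotProduct_self_pos hx).ne'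

theorem exists_lt_forall_dotProduct_mulVec_le [DecidableEq ι] (A : Matrix ι ι ℝ) (b : ℝ)
    (hA : ∀ x ≠ 0, x ⬝ᵥ A *ᵥ x < b * (x ⬝ᵥ x)) :
    ∃ c < b, ∀ x, x ⬝ᵥ A *ᵥ x ≤ c * (x ⬝ᵥ x) := by
  have hgap : ∀ x, x ⬝ᵥ (b • 1 - A) *ᵥ x = b * (x ⬝ᵥ x) - x ⬝ᵥ A *ᵥ x := fun x ↦ by
    simp only [sub_mulVec, smul_mulVec, one_mulVec, dotProduct_sub, dotProduct_smul, smul_eq_mul]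
  obtain ⟨δ, hδ, h⟩ := exists_pos_mul_dotProduct_self_le (b • 1 - A) fun x hx ↦ by
    linarith [hgap x, hA x hx]
  exact ⟨b - δ, by linarith, fun x ↦ by linarith [hgap x, h x]⟩

theorem dotProduct_inv_mulVec_sub_smul_mulVec [DecidableEq ι] {Γ : Matrix ι ι ℝ} (hΓ : Γ.IsSymm)
    (hΓ_unit : IsUnit Γ) (u z : ι → ℝ) (d : ℝ) :
    (u - d • Γ *ᵥ z) ⬝ᵥ Γ⁻¹ *ᵥ (u - d • Γ *ᵥ z) =
      u ⬝ᵥ Γ⁻¹ *ᵥ u - 2 * d * (u ⬝ᵥ z) + d ^ 2 * (z ⬝ᵥ Γ *ᵥ z) := by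
  have hcancel : Γ⁻¹ *ᵥ Γ *ᵥ z = z := by
    rw [mulVec_mulVec, nonsing_inv_mul _ ((isUnit_iff_isUnit_det Γ).mp hΓ_unit), one_mulVec]
  have hswap : (Γ *ᵥ z) ⬝ᵥ Γ⁻¹ *ᵥ u = z ⬝ᵥ u := by
    rw [dotProduct_mulVec, ← mulVec_transpose, hΓ.inv.eq, hcancel]
  simp only [mulVec_sub, mulVec_smul, sub_dotProduct, dotProduct_sub, smul_dotProduct,
    dotProduct_smul, smul_eq_mul, hswap, hcancel, dotProduct_comm z u, dotProduct_comm (Γ *ᵥ z) z]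
  ring

end Matrix

section AdaptiveLaw

variable {ι : Type*} [Fintype ι] [DecidableEq ι]

noncomputable def adaptiveLyapunov (kp γ : ℝ) (Γ : Matrix ι ι ℝ) (θ : ι → ℝ) (ρ : ℝ) : ℝ :=
  |kp| * (θ ⬝ᵥ Γ⁻¹ *ᵥ θ) + ρ ^ 2 / γ

theorem adaptiveLyapunov_nonneg (kp : ℝ) {γ : ℝ} (hγ : 0 ≤ γ) {Γ : Matrix ι ι ℝ} (hΓ : Γ.PosDef)
    (θ : ι → ℝ) (ρ : ℝ) : 0 ≤ adaptiveLyapunov kp γ Γ θ ρ := by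
  have hθ : 0 ≤ θ ⬝ᵥ Γ⁻¹ *ᵥ θ := by
    simpa using hΓ.inv.posSemidef.dotProduct_mulVec_nonneg θ
  unfold adaptiveLyapunov
  positivity

theorem adaptiveLyapunov_update (kp : ℝ) {γ : ℝ} (hγ : γ ≠ 0) {Γ : Matrix ι ι ℝ} (hΓ : Γ.IsSymm)
    (hΓ_unit : IsUnit Γ) (θ ζ : ι → ℝ) (ρ ξ s : ℝ) :
    adaptiveLyapunov kp γ Γ (θ - (Real.sign kp * s) • Γ *ᵥ ζ) (ρ - γ * ξ * s) =
      adaptiveLyapunov kp γ Γ θ ρ - 2 * s * (kp * (θ ⬝ᵥ ζ) + ρ * ξ)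
        + s ^ 2 * (|kp| * (ζ ⬝ᵥ Γ *ᵥ ζ) + γ * ξ ^ 2) := by
  unfold adaptiveLyapunov
  rw [dotProduct_inv_mulVec_sub_smul_mulVec hΓ hΓ_unit]
  field_simp
  linear_combination (-2 * s * γ * (θ ⬝ᵥ ζ)) * Real.sign_mul_abs_self kp
    + (s ^ 2 * γ * (ζ ⬝ᵥ Γ *ᵥ ζ)) * Real.abs_mul_sign_sq kp

theorem adaptiveLyapunov_update_le (kp : ℝ) {γ c : ℝ} (hγ : 0 < γ) (hγc : γ ≤ c)
    {Γ : Matrix ι ι ℝ} (hΓ : Γ.IsSymm) (hΓ_unit : IsUnit Γ)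
    (hc : ∀ x, |kp| * (x ⬝ᵥ Γ *ᵥ x) ≤ c * (x ⬝ᵥ x)) {θ ζ : ι → ℝ} {ρ ξ m ε : ℝ}
    (hm : m ^ 2 = 1 + ζ ⬝ᵥ ζ + ξ ^ 2) (hε : ε = kp * (θ ⬝ᵥ ζ) + ρ * ξ) :
    adaptiveLyapunov kp γ Γ (θ - (Real.sign kp * (ε / m ^ 2)) • Γ *ᵥ ζ) (ρ - γ * ξ * (ε / m ^ 2))
      ≤ adaptiveLyapunov kp γ Γ θ ρ - (2 - c) * (ε ^ 2 / m ^ 2) := by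
  rw [adaptiveLyapunov_update kp hγ.ne' hΓ hΓ_unit, ← hε]
  have hm_pos : 0 < m ^ 2 := by linarith [dotProduct_self_nonneg ζ, sq_nonneg ξ]
  have hgain : |kp| * (ζ ⬝ᵥ Γ *ᵥ ζ) + γ * ξ ^ 2 ≤ c * m ^ 2 := by
    nlinarith [hc ζ, sq_nonneg ξ]
  have : (ε / m ^ 2) ^ 2 * (|kp| * (ζ ⬝ᵥ Γ *ᵥ ζ) + γ * ξ ^ 2) ≤ c * (ε ^ 2 / m ^ 2) := by
    calc _ ≤ (ε / m ^ 2) ^ 2 * (c * m ^ 2) := by gcongr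
      _ = c * (ε ^ 2 / m ^ 2) := by field_simp
  linarith [show 2 * (ε / m ^ 2) * ε = 2 * (ε ^ 2 / m ^ 2) by ring]

end AdaptiveLaw

theorem siso_discrete_adaptive_law_estimation_error_L2_Linfty_general
    (N : ℕ)
    (ζ : ℕ → Fin N → ℝ) (ξ : ℕ → ℝ)
    (kp : ℝ)
    (θs : Fin N → ℝ)
    (Γ : Matrix (Fin N) (Fin N) ℝ) (hΓ : Γ.PosDef)
    (hΓ2 : ∀ x : Fin N → ℝ, x ≠ 0 →
      |kp| * (∑ i, x i * (Γ.mulVec x) i) < 2 * ∑ i, x i * x i)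
    (γ : ℝ) (hγ1 : 0 < γ) (hγ2 : γ < 2)
    (θ : ℕ → Fin N → ℝ) (ρ : ℕ → ℝ)
    (m ε : ℕ → ℝ)
    (hm : ∀ t, m t = Real.sqrt (1 + (∑ i, ζ t i * ζ t i) + ξ t ^ 2))
    (hε : ∀ t, ε t = kp * (∑ i, (θ t i - θs i) * ζ t i) + (ρ t - kp) * ξ t)
    (hθ : ∀ t, θ (t + 1) = θ t - (Real.sign kp * ε t / m t ^ 2) • Γ.mulVec (ζ t))
    (hρ : ∀ t, ρ (t + 1) = ρ t - γ * ξ t * ε t / m t ^ 2) :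
    Summable (fun t => ε t ^ 2 / m t ^ 2) ∧ (∃ C : ℝ, ∀ t, |ε t| / m t ≤ C) := by
  obtain ⟨c, hc2, hc⟩ := exists_lt_forall_dotProduct_mulVec_le (|kp| • Γ) 2 fun x hx ↦ by
    rw [smul_mulVec, dotProduct_smul, smul_eq_mul]
    exact hΓ2 x hx
  have hΓc : ∀ x, |kp| * (x ⬝ᵥ Γ *ᵥ x) ≤ max c γ * (x ⬝ᵥ x) := fun x ↦ by
    rw [← smul_eq_mul, ← dotProduct_smul, ← smul_mulVec]
    exact (hc x).trans (mul_le_mul_of_nonneg_right (le_max_left c γ) (dotProduct_self_nonneg x))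
  have hm2 : ∀ t, m t ^ 2 = 1 + ζ t ⬝ᵥ ζ t + ξ t ^ 2 := fun t ↦ by
    rw [hm]
    exact Real.sq_sqrt <|
      add_nonneg (add_nonneg zero_le_one (dotProduct_self_nonneg _)) (sq_nonneg _)
  set κ := 2 - max c γ
  have hκ : 0 < κ := sub_pos.mpr (max_lt hc2 hγ2)
  set V := fun t ↦ adaptiveLyapunov kp γ Γ (θ t - θs) (ρ t - kp)
  have hstep : ∀ t, V (t + 1) ≤ V t - κ * (ε t ^ 2 / m t ^ 2) := fun t ↦ by
    simp only [V, hθ, hρ, sub_right_comm _ _ θs, sub_right_comm _ _ kp, mul_div_assoc]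
    exact adaptiveLyapunov_update_le kp hγ1 (le_max_right c γ)
      (isHermitian_iff_isSymm.mp hΓ.isHermitian) hΓ.isUnit hΓc (hm2 t) (hε t)
  obtain ⟨hsummable, hbdd⟩ := summable_and_le_div_of_le_sub (V := V) hκ
    (fun t ↦ adaptiveLyapunov_nonneg kp hγ1.le hΓ _ _) (fun t ↦ by positivity) hstep
  refine ⟨hsummable, √(V 0 / κ), fun t ↦ ?_⟩
  rw [← abs_of_nonneg (hm t ▸ Real.sqrt_nonneg _ : 0 ≤ m t), ← abs_div]
  exact Real.abs_le_sqrt (by rw [div_pow]; exact hbdd t)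

/-- SISO discrete-time adaptive law (Lemma 2.1): under `Γ < (2/|k_p|) I`,
the normalized estimation error `ε/m` is square-summable and uniformly bounded. -/
theorem siso_discrete_adaptive_law_estimation_error_L2_Linfty
    (N : ℕ) (hN : 0 < N)
    (ζ : ℕ → Fin N → ℝ) (ξ : ℕ → ℝ)
    (kp : ℝ) (hkp : kp ≠ 0)
    (θs : Fin N → ℝ)
    (Γ : Matrix (Fin N) (Fin N) ℝ) (hΓ : Γ.PosDef)
    (hΓ2 : ∀ x : Fin N → ℝ, x ≠ 0 →
      |kp| * (∑ i, x i * (Γ.mulVec x) i) < 2 * ∑ i, x i * x i)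
    (γ : ℝ) (hγ1 : 0 < γ) (hγ2 : γ < 2)
    (θ : ℕ → Fin N → ℝ) (ρ : ℕ → ℝ)
    (m ε : ℕ → ℝ)
    (hm : ∀ t, m t = Real.sqrt (1 + (∑ i, ζ t i * ζ t i) + ξ t ^ 2))
    (hε : ∀ t, ε t = kp * (∑ i, (θ t i - θs i) * ζ t i) + (ρ t - kp) * ξ t)
    (hθ : ∀ t, θ (t + 1) = θ t - (Real.sign kp * ε t / m t ^ 2) • Γ.mulVec (ζ t))
    (hρ : ∀ t, ρ (t + 1) = ρ t - γ * ξ t * ε t / m t ^ 2) :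
    Summable (fun t => ε t ^ 2 / m t ^ 2) ∧ (∃ C : ℝ, ∀ t, |ε t| / m t ≤ C) :=
  siso_discrete_adaptive_law_estimation_error_L2_Linfty_general N ζ ξ kp θs Γ hΓ hΓ2 γ hγ1 hγ2 θ ρ m
    ε hm hε hθ hρ
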